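/- arXiv:2405.11590 — 4 statements merged into one kernel-verified Lean document; each statement's English description precedes it below -/
import Mathlib

section
/- Let 0 ≤ σ_W < 1, L' > 0, Θ = (1+σ_W²)/(1−σ_W²), and G̃ = [[(1+σ_W²)/2 + 4L'²α²Θ, 8Θ], [α²L'²Θ, (1+σ_W²)/2]]. Let (a_k)_{k≥0}, (b_k)_{k≥0}, (c_k)_{k≥0} be nonnegative real sequences with a_0 = b_0 = 0 satisfying, for all k ≥ 1, the element-wise recursion (a_k, b_k)ᵀ ≤ G̃ (a_{k−1}, b_{k−1})ᵀ + (4L'α²Θ c_{k−1}, 0)ᵀ. If 0 < α < (1−σ_W²)²/(16L'(1+σ_W²)), then for every K ≥ 1: Σ_{k=1}^K b_k / L' ≤ 32α⁴L'² ((1+σ_W²)²/(1−σ_W²)⁴) Σ_{k=1}^K c_{k−1}. In particular, with a_k = ‖𝐲_k − 𝐲̄_k‖_F²/L', b_k = L'‖𝐱_k − 𝐱̄_k‖_F², c_k = ‖𝐲̄_k‖_F², this gives Σ_{k=1}^K ‖𝐱_k − 𝐱̄_k‖_F² ≤ 32α⁴L'² ((1+σ_W²)²/(1−σ_W²)⁴)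 Σ_{k=1}^K ‖𝐲̄_{k−1}‖_F². -/
open Matrix BigOperators Finset

noncomputable section

namespace DRFGT

/-- Frobenius inner product `⟨A, B⟩ = Tr (A Bᵀ)`. -/
def finner {m k : Type*} [Fintype m] [Fintype k] (A B : Matrix m k ℝ) : ℝ :=
  Matrix.trace (A * Bᵀ)

/-- Frobenius norm `‖A‖_F = √⟨A, A⟩`. -/
def fnorm {m k : Type*} [Fintype m] [Fintype k] (A : Matrix m k ℝ) : ℝ :=
  Real.sqrt (finner A A)

/-- Skew part of a square matrix, `skew(A) = (A − Aᵀ)/2`. -/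
def mskew {m : Type*} [Fintype m] (A : Matrix m m ℝ) : Matrix m m ℝ :=
  (2 : ℝ)⁻¹ • (A - Aᵀ)

/-- Symmetric part of a square matrix, `sym(A) = (A + Aᵀ)/2`. -/
def msym {m : Type*} [Fintype m] (A : Matrix m m ℝ) : Matrix m m ℝ :=
  (2 : ℝ)⁻¹ • (A + Aᵀ)

/-- Relative (Riemannian) gradient `grad f(x) = skew(∇f(x) xᵀ) x`, where `Df` denotes the
Euclidean gradient `∇f` of `f`. -/
def rgrad {d r : ℕ} (Df : Matrix (Fin d) (Fin r) ℝ → Matrix (Fin d) (Fin r) ℝ)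
    (x : Matrix (Fin d) (Fin r) ℝ) : Matrix (Fin d) (Fin r) ℝ :=
  mskew (Df x * xᵀ) * x

/-- Landing field `Λ(x) = grad f(x) + λ x (xᵀ x − I_r)`. -/
def landing {d r : ℕ} (Df : Matrix (Fin d) (Fin r) ℝ → Matrix (Fin d) (Fin r) ℝ) (lam : ℝ)
    (x : Matrix (Fin d) (Fin r) ℝ) : Matrix (Fin d) (Fin r) ℝ :=
  rgrad Df x + lam • (x * (xᵀ * x - 1))

/-- The Stiefel manifold `St(d,r) = {x : xᵀ x = I_r}`. -/
def St (d r : ℕ) : Set (Matrix (Fin d) (Fin r) ℝ) := {x | xᵀ * x = 1}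

/-- The safety region `St(d,r)^ε = {x : ‖xᵀ x − I_r‖_F ≤ ε}`. -/
def StEps (d r : ℕ) (ε : ℝ) : Set (Matrix (Fin d) (Fin r) ℝ) :=
  {x | fnorm (xᵀ * x - 1) ≤ ε}

/-- The merit function `𝓛(x) = f(x) − ½⟨sym(xᵀ∇f(x)), xᵀx − I_r⟩ + γ·¼‖xᵀx − I_r‖_F²`. -/
def merit {d r : ℕ} (f : Matrix (Fin d) (Fin r) ℝ → ℝ)
    (Df : Matrix (Fin d) (Fin r) ℝ → Matrix (Fin d) (Fin r) ℝ) (γ : ℝ)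
    (x : Matrix (Fin d) (Fin r) ℝ) : ℝ :=
  f x - (2 : ℝ)⁻¹ * finner (msym (xᵀ * Df x)) (xᵀ * x - 1)
    + γ * (4 : ℝ)⁻¹ * fnorm (xᵀ * x - 1) ^ 2

/-- The gradient of the merit function at on-manifold points:
`∇𝓛(x) = ∇f(x) − x · sym(xᵀ∇f(x))` for `x ∈ St(d,r)`. -/
def meritGradSt {d r : ℕ} (Df : Matrix (Fin d) (Fin r) ℝ → Matrix (Fin d) (Fin r) ℝ)
    (x : Matrix (Fin d) (Fin r) ℝ) : Matrix (Fin d) (Fin r) ℝ :=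
  Df x - x * msym (xᵀ * Df x)

/-- `x'` is the polar factor of a full-column-rank `x`, i.e. the projection `Proj_St(x)` of `x`
onto the Stiefel manifold: if `x = U S Vᵀ` is a thin SVD then `x' = U Vᵀ`, equivalently
`x'ᵀ x' = I_r` and `x = x' P` for a positive definite `P` (namely `P = V S Vᵀ`). -/
def IsPolarFactor {d r : ℕ} (x x' : Matrix (Fin d) (Fin r) ℝ) : Prop :=
  x'ᵀ * x' = 1 ∧ ∃ P : Matrix (Fin r) (Fin r) ℝ, P.PosDef ∧ x = x' * P

/-- Frobenius distance from `x` to a set `S`: `dist(S,x) = inf_{y ∈ S} ‖x − y‖_F`. -/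
def fdist {d r : ℕ} (S : Set (Matrix (Fin d) (Fin r) ℝ)) (x : Matrix (Fin d) (Fin r) ℝ) : ℝ :=
  sInf ((fun y => fnorm (x - y)) '' S)

/-- Network average `z̄ = (1/n) Σᵢ zᵢ`. -/
def avg {n d r : ℕ} (z : Fin n → Matrix (Fin d) (Fin r) ℝ) : Matrix (Fin d) (Fin r) ℝ :=
  (n : ℝ)⁻¹ • ∑ i, z i

/-- Frobenius norm of a stacked family: `‖𝐳‖_F = (Σᵢ ‖zᵢ‖_F²)^{1/2}`. -/
def snorm {n d r : ℕ} (z : Fin n → Matrix (Fin d) (Fin r) ℝ) : ℝ :=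
  Real.sqrt (∑ i, fnorm (z i) ^ 2)


/-- Auxiliary algebraic lemma for the accumulated consensus error bound. -/
lemma aux_drfgt (u v L' α Sa Sb Sc : ℝ) (hu : 0 < u) (hu1 : u ≤ 1) (hv1 : 1 ≤ v)
    (hα : 0 < α) (hL' : 0 < L') (h16 : 16 * L' * v * α < u ^ 2)
    (hSa : 0 ≤ Sa) (hSc : 0 ≤ Sc)
    (H1 : u ^ 2 * Sa ≤ 8 * L' ^ 2 * α ^ 2 * v * Sa + 16 * v * Sb + 8 * L' * α ^ 2 * v * Sc)
    (H2 : u ^ 2 * Sb ≤ 2 * α ^ 2 * L' ^ 2 * v * Sa) :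
    u ^ 4 * Sb ≤ 32 * α ^ 4 * L' ^ 3 * v ^ 2 * Sc := by
  have hv0 : 0 < v := lt_of_lt_of_le one_pos hv1
  have hx : 0 < 16 * L' * v * α := by positivity
  have hc1 : 32 * α ^ 2 * L' ^ 2 * v ^ 2 ≤ u ^ 4 / 8 := by
    nlinarith [mul_lt_mul_of_pos_left h16 hx, mul_lt_mul_of_pos_right h16 (pow_pos hu 2)]
  have hLαv : L' * α * v < u ^ 2 / 16 := by nlinarith
  have hLα : L' * α < u ^ 2 / 16 := by nlinarith [mul_le_mul_of_nonneg_left hv1 (mul_pos hL' hα).le]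
  have hc2 : 8 * L' ^ 2 * α ^ 2 * v * u ^ 2 ≤ u ^ 4 / 32 := by
    have p1 : (L' * α * v) * (L' * α) < (u ^ 2 / 16) * (u ^ 2 / 16) :=
      mul_lt_mul'' hLαv hLα (by positivity) (by positivity)
    have p2 := mul_le_mul_of_nonneg_right p1.le (sq_nonneg u)
    have hu64 : u ^ 6 ≤ u ^ 4 := pow_le_pow_of_le_one hu.le hu1 (by norm_num)
    nlinarith [p2, hu64]
  have hposc : 0 ≤ L' * α ^ 2 * v * u ^ 2 * Sc := by positivity
  have hSaB : u ^ 4 * Sa ≤ 16 * L' * α ^ 2 * v * u ^ 2 * Sc := by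
    have m1 := mul_le_mul_of_nonneg_left H1 (sq_nonneg u)
    have m2 := mul_le_mul_of_nonneg_left H2 (by positivity : (0:ℝ) ≤ 16 * v)
    have m3 := mul_le_mul_of_nonneg_right hc1 hSa
    have m4 := mul_le_mul_of_nonneg_right hc2 hSa
    nlinarith [m1, m2, m3, m4, hposc]
  have m5 := mul_le_mul_of_nonneg_left H2 (by positivity : (0:ℝ) ≤ u ^ 4)
  have m6 := mul_le_mul_of_nonneg_left hSaB (by positivity : (0:ℝ) ≤ 2 * α ^ 2 * L' ^ 2 * v)
  have h7 : u ^ 2 * (u ^ 4 * Sb) ≤ u ^ 2 * (32 * α ^ 4 * L' ^ 3 * v ^ 2 * Sc) := by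
    nlinarith [m5, m6]
  exact le_of_mul_le_mul_left h7 (pow_pos hu 2)

/-- accumulated consensus error, Corollary 1 of the paper. Nonnegative
sequences `(a_k), (b_k), (c_k)` with `a_0 = b_0 = 0` satisfying the element-wise recursion
`(a_k, b_k)ᵀ ≤ G̃ (a_{k−1}, b_{k−1})ᵀ + (4L'α²Θ c_{k−1}, 0)ᵀ`, where
`Θ = (1+σ_W²)/(1−σ_W²)` and `G̃` is the consensus-error transition matrix. If
`0 < α < (1−σ_W²)²/(16L'(1+σ_W²))`, then for every `K ≥ 1`,
`Σ_{k=1}^K b_k / L' ≤ 32α⁴L'²((1+σ_W²)²/(1−σ_W²)⁴) Σ_{k=1}^K c_{k−1}`. -/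
theorem accumulated_consensus_error (σW L' α : ℝ)
    (hσ0 : 0 ≤ σW) (hσ1 : σW < 1) (hL' : 0 < L') (hα : 0 < α)
    (hαlt : α < (1 - σW ^ 2) ^ 2 / (16 * L' * (1 + σW ^ 2)))
    (a b c : ℕ → ℝ)
    (ha : ∀ k, 0 ≤ a k) (hb : ∀ k, 0 ≤ b k) (hc : ∀ k, 0 ≤ c k)
    (ha0 : a 0 = 0) (hb0 : b 0 = 0)
    (hrecA : ∀ k : ℕ, a (k + 1) ≤
      ((1 + σW ^ 2) / 2 + 4 * L' ^ 2 * α ^ 2 * ((1 + σW ^ 2) / (1 - σW ^ 2))) * a k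
        + 8 * ((1 + σW ^ 2) / (1 - σW ^ 2)) * b k
        + 4 * L' * α ^ 2 * ((1 + σW ^ 2) / (1 - σW ^ 2)) * c k)
    (hrecB : ∀ k : ℕ, b (k + 1) ≤
      α ^ 2 * L' ^ 2 * ((1 + σW ^ 2) / (1 - σW ^ 2)) * a k + (1 + σW ^ 2) / 2 * b k) :
    ∀ K : ℕ, 1 ≤ K →
      (∑ k ∈ Finset.range K, b (k + 1)) / L' ≤
        32 * α ^ 4 * L' ^ 2 * ((1 + σW ^ 2) ^ 2 / (1 - σW ^ 2) ^ 4)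
          * ∑ k ∈ Finset.range K, c k := by
  intro K hK
  obtain ⟨n, rfl⟩ : ∃ n, K = n + 1 := ⟨K - 1, by omega⟩
  have ht : σW ^ 2 < 1 := by nlinarith
  set u := 1 - σW ^ 2 with hud
  set v := 1 + σW ^ 2 with hvd
  have hu : 0 < u := by rw [hud]; linarith
  have hv1 : (1:ℝ) ≤ v := by rw [hvd]; nlinarith [sq_nonneg σW]
  have hv0 : (0:ℝ) < v := lt_of_lt_of_le one_pos hv1
  have hvu : v = 2 - u := by rw [hud, hvd]; ring
  have hu1 : u ≤ 1 := by rw [hud]; nlinarith [sq_nonneg σW]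
  have h16 : 16 * L' * v * α < u ^ 2 := by
    have hpos : (0:ℝ) < 16 * L' * v := by positivity
    have h := (lt_div_iff₀ hpos).mp hαlt
    linarith
  clear_value u v
  -- shifted-sum comparison
  have sum_shift : ∀ f : ℕ → ℝ, f 0 = 0 → (∀ k, 0 ≤ f k) →
      ∑ k ∈ Finset.range (n + 1), f k ≤ ∑ k ∈ Finset.range (n + 1), f (k + 1) := by
    intro f h0 hf
    rw [Finset.sum_range_succ' f n, Finset.sum_range_succ (fun k => f (k + 1)) n, h0]
    simpa using hf (n + 1)
  set Sa := ∑ k ∈ Finset.range (n + 1), a (k + 1) with hSad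
  set Sb := ∑ k ∈ Finset.range (n + 1), b (k + 1) with hSbd
  set Sc := ∑ k ∈ Finset.range (n + 1), c k with hScd
  have hTa := sum_shift a ha0 ha
  have hTb := sum_shift b hb0 hb
  have hSa0 : 0 ≤ Sa := Finset.sum_nonneg fun k _ => ha (k + 1)
  have hSb0 : 0 ≤ Sb := Finset.sum_nonneg fun k _ => hb (k + 1)
  have hSc0 : 0 ≤ Sc := Finset.sum_nonneg fun k _ => hc k
  have hΘ : (0:ℝ) ≤ v / u := by positivity
  have hA : Sa ≤ (v / 2 + 4 * L' ^ 2 * α ^ 2 * (v / u)) * (∑ k ∈ Finset.range (n+1), a k)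
      + 8 * (v / u) * (∑ k ∈ Finset.range (n+1), b k)
      + 4 * L' * α ^ 2 * (v / u) * Sc := by
    rw [hSad]
    calc ∑ k ∈ Finset.range (n + 1), a (k + 1)
        ≤ ∑ k ∈ Finset.range (n + 1),
            ((v / 2 + 4 * L' ^ 2 * α ^ 2 * (v / u)) * a k + 8 * (v / u) * b k
              + 4 * L' * α ^ 2 * (v / u) * c k) := Finset.sum_le_sum fun k _ => hrecA k
      _ = _ := by
          rw [Finset.sum_add_distrib, Finset.sum_add_distrib, ← Finset.mul_sum,
            ← Finset.mul_sum, ← Finset.mul_sum]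
  have hB : Sb ≤ α ^ 2 * L' ^ 2 * (v / u) * (∑ k ∈ Finset.range (n+1), a k)
      + v / 2 * (∑ k ∈ Finset.range (n+1), b k) := by
    rw [hSbd]
    calc ∑ k ∈ Finset.range (n + 1), b (k + 1)
        ≤ ∑ k ∈ Finset.range (n + 1),
            (α ^ 2 * L' ^ 2 * (v / u) * a k + v / 2 * b k) :=
          Finset.sum_le_sum fun k _ => hrecB k
      _ = _ := by rw [Finset.sum_add_distrib, ← Finset.mul_sum, ← Finset.mul_sum]
  have hPnn : (0:ℝ) ≤ v / 2 + 4 * L' ^ 2 * α ^ 2 * (v / u) := by positivity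
  have hQnn : (0:ℝ) ≤ 8 * (v / u) := by positivity
  have hA2 : Sa ≤ (v / 2 + 4 * L' ^ 2 * α ^ 2 * (v / u)) * Sa + 8 * (v / u) * Sb
      + 4 * L' * α ^ 2 * (v / u) * Sc := by
    have h1 := mul_le_mul_of_nonneg_left hTa hPnn
    have h2 := mul_le_mul_of_nonneg_left hTb hQnn
    linarith
  have hB2 : Sb ≤ α ^ 2 * L' ^ 2 * (v / u) * Sa + v / 2 * Sb := by
    have h1 := mul_le_mul_of_nonneg_left hTa (by positivity : (0:ℝ) ≤ α ^ 2 * L' ^ 2 * (v / u))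
    have h2 := mul_le_mul_of_nonneg_left hTb (by positivity : (0:ℝ) ≤ v / 2)
    linarith
  have H1 : u ^ 2 * Sa ≤ 8 * L' ^ 2 * α ^ 2 * v * Sa + 16 * v * Sb + 8 * L' * α ^ 2 * v * Sc := by
    have key : (v / 2 + 4 * L' ^ 2 * α ^ 2 * (v / u)) * Sa + 8 * (v / u) * Sb
        + 4 * L' * α ^ 2 * (v / u) * Sc
        = ((u * v / 2 + 4 * L' ^ 2 * α ^ 2 * v) * Sa + 8 * v * Sb + 4 * L' * α ^ 2 * v * Sc) / u := by
      field_simp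
    rw [key, le_div_iff₀ hu] at hA2
    have e2 : u * v * Sa = (2 * u - u ^ 2) * Sa := by rw [hvu]; ring
    linarith
  have H2 : u ^ 2 * Sb ≤ 2 * α ^ 2 * L' ^ 2 * v * Sa := by
    have key : α ^ 2 * L' ^ 2 * (v / u) * Sa + v / 2 * Sb
        = (α ^ 2 * L' ^ 2 * v * Sa + u * v / 2 * Sb) / u := by
      field_simp
    rw [key, le_div_iff₀ hu] at hB2
    have e2 : u * v * Sb = (2 * u - u ^ 2) * Sb := by rw [hvu]; ring
    linarith
  have final := aux_drfgt u v L' α Sa Sb Sc hu hu1 hv1 hα hL' h16 hSa0 hSc0 H1 H2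
  rw [div_le_iff₀ hL']
  have e : 32 * α ^ 4 * L' ^ 2 * (v ^ 2 / u ^ 4) * Sc * L'
      = 32 * α ^ 4 * L' ^ 3 * v ^ 2 * Sc / u ^ 4 := by ring
  rw [e, le_div_iff₀ (by positivity : (0:ℝ) < u ^ 4)]
  linarith


end DRFGT
end
end

section
/- Let ε ∈ (0, 3/4), λ > 0, ρ > 0, μ' > 0, L' > 0, n ≥ 1, C = 3L'/(λ(1−ε)) + 2, and let 0 < α ≤ ρ/(2L'). Let x_{i,k−1} ∈ ℝ^{d×r} (i ∈ [n]), x̄_{k−1} = (1/n)Σ_i x_{i,k−1}, ȳ_{k−1} = (1/n)Σ_i Λ_i(x_{i,k−1}), x̄_k = x̄_{k−1} − α ȳ_{k−1}. Assume: each Λ_i is L'-Lipschitz; the descent inequality 𝓛(x̄_k) ≤ 𝓛(x̄_{k−1}) + ⟨∇𝓛(x̄_{k−1}), x̄_k − x̄_{k−1}⟩ + (L'/2)‖x̄_k − x̄_{k−1}‖_F²; ⟨Λ(x̄_{k−1}), ∇𝓛(x̄_{k−1})⟩ ≥ ρ‖Λ(x̄_{k−1})‖_F²; ‖∇𝓛(x̄_{k−1})‖_F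 ≤ C‖Λ(x̄_{k−1})‖_F; and the pseudo gradient domination 𝓛(x̄_{k−1}) − 𝓛*_S ≤ (1/μ')‖Λ(x̄_{k−1})‖_F². Then 𝓛(x̄_k) − 𝓛*_S ≤ (1 − ραμ'/4)(𝓛(x̄_{k−1}) − 𝓛*_S) + (L'²α² + αL'C²/ρ)·(L'/n)·‖𝐱_{k−1} − 𝐱̄_{k−1}‖_F². -/
open Matrix BigOperators Finset

noncomputable section

namespace DRFGT

/-! The averaged iterate takes a perturbed landing step `x̄_k = x̄_{k-1} - α (Λ(x̄_{k-1}) + e)`.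
Since `Λ` is the average of the `L'`-Lipschitz fields `Λᵢ`, Jensen's inequality bounds the
consensus error by `‖e‖² ≤ (L'²/n) ‖𝐱 - 𝐱̄‖²`. In the descent inequality, the compatibility
`⟨Λ, ∇𝓛⟩ ≥ ρ‖Λ‖²`, the comparison `‖∇𝓛‖ ≤ C‖Λ‖`, Young's inequality and `αL' ≤ ρ/2` leave a
decrease of `(ρα/4)‖Λ‖²` up to `(αC²/ρ + L'α²)‖e‖²`, and pseudo gradient domination turns that
decrease into the contraction factor `1 - ραμ'/4`. -/

section Frobenius

variable {m k : Type*} [Fintype m] [Fintype k]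

def frobeniusVec : Matrix m k ℝ →ₗ[ℝ] EuclideanSpace ℝ (k × m) where
  toFun A := WithLp.toLp 2 A.vec
  map_add' _ _ := rfl
  map_smul' _ _ := rfl

lemma finner_eq_inner (A B : Matrix m k ℝ) :
    finner A B = inner ℝ (frobeniusVec A) (frobeniusVec B) := by
  rw [finner, trace_mul_comm, ← vec_dotProduct_vec]
  rfl

lemma fnorm_eq_norm (A : Matrix m k ℝ) : fnorm A = ‖frobeniusVec A‖ := by
  rw [fnorm, finner_eq_inner, real_inner_self_eq_norm_sq, Real.sqrt_sq (norm_nonneg _)]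

end Frobenius

lemma norm_inv_smul_sum_sq_le {E : Type*} [SeminormedAddCommGroup E] [NormedSpace ℝ E] {n : ℕ}
    (z : Fin n → E) : ‖(n : ℝ)⁻¹ • ∑ i, z i‖ ^ 2 ≤ (∑ i, ‖z i‖ ^ 2) / n := by
  have hnorm : ‖(n : ℝ)⁻¹ • ∑ i, z i‖ ≤ (n : ℝ)⁻¹ * ∑ i, ‖z i‖ := by
    rw [norm_smul, Real.norm_of_nonneg (by positivity)]
    exact mul_le_mul_of_nonneg_left (norm_sum_le _ _) (by positivity)
  have hcs : (∑ i, ‖z i‖) ^ 2 ≤ n * ∑ i, ‖z i‖ ^ 2 := by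
    simpa using sq_sum_le_card_mul_sum_sq (s := univ) (f := fun i => ‖z i‖)
  calc ‖(n : ℝ)⁻¹ • ∑ i, z i‖ ^ 2 ≤ ((n : ℝ)⁻¹ * ∑ i, ‖z i‖) ^ 2 :=
        pow_le_pow_left₀ (norm_nonneg _) hnorm 2
    _ ≤ (n : ℝ)⁻¹ ^ 2 * (n * ∑ i, ‖z i‖ ^ 2) := by
        rw [mul_pow]; exact mul_le_mul_of_nonneg_left hcs (by positivity)
    _ = (∑ i, ‖z i‖ ^ 2) / n := by
        rcases eq_or_ne (n : ℝ) 0 with h | h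
        · simp [h]
        · field_simp

lemma fnorm_avg_sq_le {n d r : ℕ} (z : Fin n → Matrix (Fin d) (Fin r) ℝ) :
    fnorm (avg z) ^ 2 ≤ snorm z ^ 2 / n := by
  rw [snorm, Real.sq_sqrt (by positivity), fnorm_eq_norm, avg, map_smul, map_sum]
  simpa only [fnorm_eq_norm] using norm_inv_smul_sum_sq_le fun i => frobeniusVec (z i)

lemma snorm_sq_le_of_fnorm_le {n d r : ℕ} {L : ℝ} {z w : Fin n → Matrix (Fin d) (Fin r) ℝ}
    (h : ∀ i, fnorm (z i) ≤ L * fnorm (w i)) : snorm z ^ 2 ≤ L ^ 2 * snorm w ^ 2 := by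
  rw [snorm, snorm, Real.sq_sqrt (by positivity), Real.sq_sqrt (by positivity), mul_sum]
  refine sum_le_sum fun i _ => ?_
  rw [← mul_pow]
  exact pow_le_pow_left₀ (Real.sqrt_nonneg _) (h i) 2

lemma avg_sub_avg {n d r : ℕ} (a b : Fin n → Matrix (Fin d) (Fin r) ℝ) :
    avg a - avg b = avg (a - b) := by
  simp only [avg, Pi.sub_apply, sum_sub_distrib, smul_sub]

lemma avg_add_const {n d r : ℕ} (hn : 0 < n) (a : Fin n → Matrix (Fin d) (Fin r) ℝ)
    (c : Matrix (Fin d) (Fin r) ℝ) : avg (fun i => a i + c) = avg a + c := by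
  rw [avg, avg, sum_add_distrib, sum_const, card_univ, Fintype.card_fin, smul_add,
    ← Nat.cast_smul_eq_nsmul ℝ, smul_smul, inv_mul_cancel₀ (by positivity), one_smul]

def rgradLin {d r : ℕ} (z : Matrix (Fin d) (Fin r) ℝ) :
    Matrix (Fin d) (Fin r) ℝ →ₗ[ℝ] Matrix (Fin d) (Fin r) ℝ where
  toFun W := mskew (W * zᵀ) * z
  map_add' A B := by
    simp only [mskew, Matrix.add_mul, transpose_add, smul_add, smul_sub, Matrix.sub_mul,
      Matrix.smul_mul]
    abel
  map_smul' c A := by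
    simp only [mskew, Matrix.smul_mul, transpose_smul, smul_sub, smul_smul, RingHom.id_apply,
      Matrix.sub_mul, mul_comm]

lemma landing_avg {n d r : ℕ} (hn : 0 < n)
    (Dfi : Fin n → Matrix (Fin d) (Fin r) ℝ → Matrix (Fin d) (Fin r) ℝ) (lam : ℝ)
    (z : Matrix (Fin d) (Fin r) ℝ) :
    landing (fun z => avg fun i => Dfi i z) lam z = avg fun i => landing (Dfi i) lam z := by
  change rgradLin z (avg fun i => Dfi i z) + _ = avg fun i => rgradLin z (Dfi i z) + _
  rw [avg_add_const hn, avg, avg, map_smul, map_sum]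

lemma fnorm_avg_sub_avg_sq_le {n d r : ℕ} {L : ℝ}
    (g : Fin n → Matrix (Fin d) (Fin r) ℝ → Matrix (Fin d) (Fin r) ℝ)
    (hg : ∀ i u v, fnorm (g i u - g i v) ≤ L * fnorm (u - v))
    (x : Fin n → Matrix (Fin d) (Fin r) ℝ) (y : Matrix (Fin d) (Fin r) ℝ) :
    fnorm (avg (fun i => g i (x i)) - avg (fun i => g i y)) ^ 2
      ≤ L ^ 2 / n * snorm (fun i => x i - y) ^ 2 := by
  rw [avg_sub_avg]
  calc fnorm (avg _) ^ 2 ≤ snorm (fun i => g i (x i) - g i y) ^ 2 / n := fnorm_avg_sq_le _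
    _ ≤ L ^ 2 * snorm (fun i => x i - y) ^ 2 / n := by
        gcongr
        exact snorm_sq_le_of_fnorm_le fun i => hg i _ _
    _ = L ^ 2 / n * snorm (fun i => x i - y) ^ 2 := by ring

lemma perturbed_step_bound {E : Type*} [NormedAddCommGroup E] [InnerProductSpace ℝ E]
    {ρ C L α : ℝ} (hρ : 0 < ρ) (hα : 0 < α) (hL : 0 ≤ L) (hαL : L * α ≤ ρ / 2) {v g e : E}
    (hprop : ρ * ‖v‖ ^ 2 ≤ inner ℝ v g) (hC : ‖g‖ ≤ C * ‖v‖) :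
    inner ℝ g (-(α • (v + e))) + L / 2 * ‖-(α • (v + e))‖ ^ 2
      ≤ -(ρ * α / 4 * ‖v‖ ^ 2) + (α * C ^ 2 / ρ + L * α ^ 2) * ‖e‖ ^ 2 := by
  have hinner : ρ * ‖v‖ ^ 2 - C * ‖v‖ * ‖e‖ ≤ inner ℝ g (v + e) := by
    rw [inner_add_right, real_inner_comm]
    have hcs := (abs_le.1 (abs_real_inner_le_norm g e)).1
    linarith [mul_le_mul_of_nonneg_right hC (norm_nonneg e)]
  have hnorm : ‖v + e‖ ^ 2 ≤ 2 * ‖v‖ ^ 2 + 2 * ‖e‖ ^ 2 := by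
    nlinarith [norm_add_le v e, norm_nonneg (v + e), sq_nonneg (‖v‖ - ‖e‖)]
  have hyoung : C * ‖v‖ * ‖e‖ ≤ ρ / 4 * ‖v‖ ^ 2 + C ^ 2 / ρ * ‖e‖ ^ 2 := by
    have hsquare : ρ / 4 * ‖v‖ ^ 2 + C ^ 2 / ρ * ‖e‖ ^ 2 - C * ‖v‖ * ‖e‖
        = (ρ * ‖v‖ - 2 * C * ‖e‖) ^ 2 / (4 * ρ) := by
      field_simp
      ring
    have : 0 ≤ (ρ * ‖v‖ - 2 * C * ‖e‖) ^ 2 / (4 * ρ) := by positivity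
    linarith
  rw [inner_neg_right, inner_smul_right, norm_neg, norm_smul, Real.norm_of_nonneg hα.le, mul_pow]
  have h1 := mul_le_mul_of_nonneg_left hinner hα.le
  have h2 := mul_le_mul_of_nonneg_left hyoung hα.le
  have h3 := mul_le_mul_of_nonneg_left hnorm (by positivity : 0 ≤ L / 2 * α ^ 2)
  have h4 := mul_le_mul_of_nonneg_right hαL (by positivity : 0 ≤ α * ‖v‖ ^ 2)
  linear_combination h1 + h2 + h3 + h4

theorem merit_linear_contraction_general {n d r : ℕ} (hn : 0 < n) (lam ρ μ' L' α γ C LS : ℝ)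
    (hρ : 0 < ρ) (hμ' : 0 < μ')
    (hL' : 0 < L') (hα : 0 < α) (hαle : α ≤ ρ / (2 * L'))
    (Dfi : Fin n → Matrix (Fin d) (Fin r) ℝ → Matrix (Fin d) (Fin r) ℝ)
    (f : Matrix (Fin d) (Fin r) ℝ → ℝ)
    (Df : Matrix (Fin d) (Fin r) ℝ → Matrix (Fin d) (Fin r) ℝ)
    (hDf : Df = fun z => (n : ℝ)⁻¹ • ∑ i, Dfi i z)
    (xp : Fin n → Matrix (Fin d) (Fin r) ℝ)
    (gL : Matrix (Fin d) (Fin r) ℝ)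
    (hLip : ∀ i, ∀ u v : Matrix (Fin d) (Fin r) ℝ,
      fnorm (landing (Dfi i) lam u - landing (Dfi i) lam v) ≤ L' * fnorm (u - v))
    (ybar : Matrix (Fin d) (Fin r) ℝ) (hybar : ybar = avg (fun i => landing (Dfi i) lam (xp i)))
    (xbarNext : Matrix (Fin d) (Fin r) ℝ) (hxbarNext : xbarNext = avg xp - α • ybar)
    (hdescent : merit f Df γ xbarNext ≤ merit f Df γ (avg xp)
      + finner gL (xbarNext - avg xp) + L' / 2 * fnorm (xbarNext - avg xp) ^ 2)
    (hprop : finner (landing Df lam (avg xp)) gL ≥ ρ * fnorm (landing Df lam (avg xp)) ^ 2)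
    (hC : fnorm gL ≤ C * fnorm (landing Df lam (avg xp)))
    (hdom : merit f Df γ (avg xp) - LS ≤ (1 / μ') * fnorm (landing Df lam (avg xp)) ^ 2) :
    merit f Df γ xbarNext - LS ≤
      (1 - ρ * α * μ' / 4) * (merit f Df γ (avg xp) - LS)
        + (L' ^ 2 * α ^ 2 + α * L' * C ^ 2 / ρ) * (L' / n)
          * snorm (fun i => xp i - avg xp) ^ 2 := by
  set Λ := landing Df lam (avg xp)
  set S := snorm fun i => xp i - avg xp
  have hΛ : Λ = avg fun i => landing (Dfi i) lam (avg xp) := by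
    subst hDf
    exact landing_avg hn Dfi lam _
  have hcons : fnorm (ybar - Λ) ^ 2 ≤ L' ^ 2 / n * S ^ 2 := by
    rw [hybar, hΛ]
    exact fnorm_avg_sub_avg_sq_le _ hLip xp (avg xp)
  have hstep : xbarNext - avg xp = -(α • (Λ + (ybar - Λ))) := by
    rw [hxbarNext, add_sub_cancel]
    abel
  have hαL : L' * α ≤ ρ / 2 := by
    rw [le_div_iff₀ (by positivity)] at hαle
    linarith
  rw [hstep] at hdescent
  simp only [finner_eq_inner, fnorm_eq_norm, ge_iff_le, map_neg, map_smul, map_add]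
    at hdescent hprop hC hdom hcons
  have hdecrease := perturbed_step_bound hρ hα hL'.le hαL hprop hC (e := frobeniusVec (ybar - Λ))
  have hgap : ρ * α * μ' / 4 * (merit f Df γ (avg xp) - LS)
      ≤ ρ * α / 4 * ‖frobeniusVec Λ‖ ^ 2 := by
    calc _ ≤ ρ * α * μ' / 4 * (1 / μ' * ‖frobeniusVec Λ‖ ^ 2) := by gcongr
      _ = _ := by field_simp
  have hcons_weighted := mul_le_mul_of_nonneg_left hcons
    (by positivity : 0 ≤ α * C ^ 2 / ρ + L' * α ^ 2)
  have hcoeff : (α * C ^ 2 / ρ + L' * α ^ 2) * (L' ^ 2 / n * S ^ 2)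
      = (L' ^ 2 * α ^ 2 + α * L' * C ^ 2 / ρ) * (L' / n) * S ^ 2 := by ring
  linarith

/-- one-step linear contraction under pseudo gradient domination, Lemma 7 of
the paper. With `0 < α ≤ ρ/(2L')`, `C = 3L'/(λ(1−ε)) + 2`, `gL = ∇𝓛(x̄_{k−1})`,
`ȳ_{k−1} = (1/n)Σᵢ Λᵢ(x_{i,k−1})` and `x̄_k = x̄_{k−1} − α ȳ_{k−1}`, the assumed descent
inequality, merit/landing compatibility, gradient comparison and pseudo gradient domination
give
`𝓛(x̄_k) − 𝓛*_S ≤ (1 − ραμ'/4)(𝓛(x̄_{k−1}) − 𝓛*_S) + (L'²α² + αL'C²/ρ)(L'/n)‖𝐱_{k−1} − 𝐱̄_{k−1}‖²`. -/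
theorem merit_linear_contraction {n d r : ℕ} (hn : 0 < n) (ε lam ρ μ' L' α γ C LS : ℝ)
    (hε : ε ∈ Set.Ioo (0 : ℝ) (3 / 4)) (hlam : 0 < lam) (hρ : 0 < ρ) (hμ' : 0 < μ')
    (hL' : 0 < L') (hα : 0 < α) (hαle : α ≤ ρ / (2 * L'))
    (hCdef : C = 3 * L' / (lam * (1 - ε)) + 2)
    (fi : Fin n → Matrix (Fin d) (Fin r) ℝ → ℝ)
    (Dfi : Fin n → Matrix (Fin d) (Fin r) ℝ → Matrix (Fin d) (Fin r) ℝ)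
    (f : Matrix (Fin d) (Fin r) ℝ → ℝ) (hf : f = fun z => (n : ℝ)⁻¹ * ∑ i, fi i z)
    (Df : Matrix (Fin d) (Fin r) ℝ → Matrix (Fin d) (Fin r) ℝ)
    (hDf : Df = fun z => (n : ℝ)⁻¹ • ∑ i, Dfi i z)
    (xp : Fin n → Matrix (Fin d) (Fin r) ℝ)
    (gL : Matrix (Fin d) (Fin r) ℝ)
    (hLip : ∀ i, ∀ u v : Matrix (Fin d) (Fin r) ℝ,
      fnorm (landing (Dfi i) lam u - landing (Dfi i) lam v) ≤ L' * fnorm (u - v))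
    (ybar : Matrix (Fin d) (Fin r) ℝ) (hybar : ybar = avg (fun i => landing (Dfi i) lam (xp i)))
    (xbarNext : Matrix (Fin d) (Fin r) ℝ) (hxbarNext : xbarNext = avg xp - α • ybar)
    (hdescent : merit f Df γ xbarNext ≤ merit f Df γ (avg xp)
      + finner gL (xbarNext - avg xp) + L' / 2 * fnorm (xbarNext - avg xp) ^ 2)
    (hprop : finner (landing Df lam (avg xp)) gL ≥ ρ * fnorm (landing Df lam (avg xp)) ^ 2)
    (hC : fnorm gL ≤ C * fnorm (landing Df lam (avg xp)))
    (hdom : merit f Df γ (avg xp) - LS ≤ (1 / μ') * fnorm (landing Df lam (avg xp)) ^ 2) :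
    merit f Df γ xbarNext - LS ≤
      (1 - ρ * α * μ' / 4) * (merit f Df γ (avg xp) - LS)
        + (L' ^ 2 * α ^ 2 + α * L' * C ^ 2 / ρ) * (L' / n)
          * snorm (fun i => xp i - avg xp) ^ 2 :=
  merit_linear_contraction_general hn lam ρ μ' L' α γ C LS hρ hμ' hL' hα hαle Dfi f Df hDf xp gL
    hLip ybar hybar xbarNext hxbarNext hdescent hprop hC hdom

end DRFGT
end
end

section
/- Let W ∈ ℝ^{n×n} be symmetric doubly stochastic with second-largest singular value σ_W < 1, Θ = (1+σ_W²)/(1−σ_W²), α > 0, L' > 0, ρ > 0. Suppose x_{i,k} = Σ_j W_{ij} x_{j,k−1} − α y_{i,k−1} and y_{i,k} = Σ_j W_{ij} y_{j,k−1} + Λ_i(x_{i,k}) − Λ_i(x_{i,k−1}), where each Λ_i is L'-Lipschitz and ȳ_{k−1} = (1/n)Σ_i Λ_i(x_{i,k−1}). Assume in addition that ‖Λ(x̄_{k−1})‖_F² ≤ (12L'/ρ²)(𝓛(x̄_{k−1}) − 𝓛*_S) (as is guaranteed by the descent lemma when x̄_{k−1} ∈ St(d,r)^ε with dist(S, x̄_{k−1})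 ≤ δ ≤ 1). Then ‖𝐲_k − 𝐲̄_k‖_F² ≤ ((1+σ_W²)/2 + 4L'²α²Θ)‖𝐲_{k−1} − 𝐲̄_{k−1}‖_F² + (96 n α² L'³/ρ²)·Θ·(𝓛(x̄_{k−1}) − 𝓛*_S) + 8L'²Θ(1 + α²L'²)‖𝐱_{k−1} − 𝐱̄_{k−1}‖_F². -/
open Matrix BigOperators Finset

noncomputable section

namespace DRFGT

/-! Mixing with a doubly stochastic `W` preserves network averages, so the tracking error splits
into `W𝐲_{k−1} − 𝐲̄_{k−1}` plus the mean-removed increments `Λᵢ(x_{i,k}) − Λᵢ(x_{i,k−1})`, and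
removing the mean does not increase the norm. Hence `‖𝐲_k − 𝐲̄_k‖ ≤ σ_W‖𝐲_{k−1} − 𝐲̄_{k−1}‖ + L'‖𝐱_k − 𝐱_{k−1}‖`,
which Young's inequality with weight `(1 − σ_W²)/(2σ_W²)` squares into
`(1 + σ_W²)/2 · ‖𝐲_{k−1} − 𝐲̄_{k−1}‖² + Θ L'² ‖𝐱_k − 𝐱_{k−1}‖²`. The step `𝐱_k − 𝐱_{k−1}` is
at most the two consensus errors plus `α√n‖ȳ_{k−1}‖`, and by the tracking identity `ȳ_{k−1}` lies
within `(L'/√n)‖𝐱_{k−1} − 𝐱̄_{k−1}‖` of `Λ(x̄_{k−1})`, whose square is bounded by the merit gap. -/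

lemma mskew_smul {m : Type*} [Fintype m] (c : ℝ) (A : Matrix m m ℝ) :
    mskew (c • A) = c • mskew A := by
  simp only [mskew, transpose_smul, ← smul_sub, smul_comm c]

lemma mskew_sum {m ι : Type*} [Fintype m] (s : Finset ι) (A : ι → Matrix m m ℝ) :
    mskew (∑ i ∈ s, A i) = ∑ i ∈ s, mskew (A i) := by
  simp only [mskew, transpose_sum, ← Finset.sum_sub_distrib, Finset.smul_sum]

section Frobenius

variable {m k : Type*}

def toE : Matrix m k ℝ →ₗ[ℝ] EuclideanSpace ℝ (m × k) where
  toFun A := WithLp.toLp 2 fun p => A p.1 p.2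
  map_add' _ _ := rfl
  map_smul' _ _ := rfl

@[simp]
lemma toE_apply (A : Matrix m k ℝ) (p : m × k) : toE A p = A p.1 p.2 := rfl

lemma fnorm_eq_norm_toE [Fintype m] [Fintype k] (A : Matrix m k ℝ) : fnorm A = ‖toE A‖ := by
  simp [fnorm, finner, EuclideanSpace.norm_eq, Matrix.trace, Matrix.mul_apply,
    Fintype.sum_prod_type, sq]

lemma fnorm_nonneg [Fintype m] [Fintype k] (A : Matrix m k ℝ) : 0 ≤ fnorm A := Real.sqrt_nonneg _

lemma fnorm_le_fnorm_sub_add [Fintype m] [Fintype k] (a b : Matrix m k ℝ) :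
    fnorm a ≤ fnorm (a - b) + fnorm b := by
  have h := norm_sub_norm_le (toE a) (toE b)
  rw [← map_sub, ← fnorm_eq_norm_toE, ← fnorm_eq_norm_toE, ← fnorm_eq_norm_toE] at h
  linarith

end Frobenius

section Stack

variable {n d r : ℕ}

def toS : (Fin n → Matrix (Fin d) (Fin r) ℝ) →ₗ[ℝ]
    PiLp 2 fun _ : Fin n => EuclideanSpace ℝ (Fin d × Fin r) where
  toFun z := WithLp.toLp 2 fun i => toE (z i)
  map_add' _ _ := rfl
  map_smul' _ _ := rfl

@[simp]
lemma toS_apply (z : Fin n → Matrix (Fin d) (Fin r) ℝ) (i : Fin n) : toS z i = toE (z i) := rfl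

lemma snorm_eq_norm_toS (z : Fin n → Matrix (Fin d) (Fin r) ℝ) : snorm z = ‖toS z‖ := by
  simp only [snorm, PiLp.norm_eq_of_L2, fnorm_eq_norm_toE, toS_apply]

lemma snorm_sq (z : Fin n → Matrix (Fin d) (Fin r) ℝ) : snorm z ^ 2 = ∑ i, fnorm (z i) ^ 2 :=
  Real.sq_sqrt (by positivity)

lemma snorm_nonneg (z : Fin n → Matrix (Fin d) (Fin r) ℝ) : 0 ≤ snorm z := Real.sqrt_nonneg _

lemma snorm_add_le (a b : Fin n → Matrix (Fin d) (Fin r) ℝ) :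
    snorm (a + b) ≤ snorm a + snorm b := by
  simpa only [snorm_eq_norm_toS, map_add] using norm_add_le _ _

lemma snorm_sub_le (a b : Fin n → Matrix (Fin d) (Fin r) ℝ) :
    snorm (a - b) ≤ snorm a + snorm b := by
  simpa only [snorm_eq_norm_toS, map_sub] using norm_sub_le _ _

lemma snorm_smul (c : ℝ) (z : Fin n → Matrix (Fin d) (Fin r) ℝ) :
    snorm (c • z) = |c| * snorm z := by
  rw [snorm_eq_norm_toS, snorm_eq_norm_toS, map_smul, norm_smul, Real.norm_eq_abs]

lemma snorm_const (c : Matrix (Fin d) (Fin r) ℝ) :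
    snorm (fun _ : Fin n => c) = Real.sqrt n * fnorm c := by
  rw [snorm, Finset.sum_const, Finset.card_univ, Fintype.card_fin, nsmul_eq_mul,
    Real.sqrt_mul (Nat.cast_nonneg n), Real.sqrt_sq (fnorm_nonneg c)]

lemma snorm_le_mul_of_forall {c : ℝ} (hc : 0 ≤ c) {z w : Fin n → Matrix (Fin d) (Fin r) ℝ}
    (h : ∀ i, fnorm (z i) ≤ c * fnorm (w i)) : snorm z ≤ c * snorm w := by
  rw [snorm, snorm, ← Real.sqrt_sq hc, ← Real.sqrt_mul (sq_nonneg c), Finset.mul_sum]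
  gcongr with i
  rw [← mul_pow]
  exact pow_le_pow_left₀ (fnorm_nonneg _) (h i) 2

end Stack

lemma sum_norm_sub_sq_add_card_mul {E ι : Type*} [NormedAddCommGroup E] [InnerProductSpace ℝ E]
    [Fintype ι] (w : ι → E) {a : E} (ha : ∑ i, w i = (Fintype.card ι : ℝ) • a) :
    ∑ i, ‖w i - a‖ ^ 2 + Fintype.card ι * ‖a‖ ^ 2 = ∑ i, ‖w i‖ ^ 2 := by
  have hinner : ∑ i, inner ℝ (w i) a = Fintype.card ι * ‖a‖ ^ 2 := by
    rw [← sum_inner, ha, real_inner_smul_left, real_inner_self_eq_norm_sq]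
  simp only [norm_sub_sq_real, Finset.sum_add_distrib, Finset.sum_sub_distrib, ← Finset.mul_sum,
    hinner, Finset.sum_const, Finset.card_univ, nsmul_eq_mul]
  ring

section Average

variable {n d r : ℕ}

lemma sum_eq_card_smul_avg (z : Fin n → Matrix (Fin d) (Fin r) ℝ) :
    ∑ i, z i = (n : ℝ) • avg z := by
  rcases Nat.eq_zero_or_pos n with rfl | hn
  · simp
  · rw [avg, smul_inv_smul₀ (Nat.cast_ne_zero.mpr hn.ne')]

lemma snorm_sq_eq_snorm_sub_avg_sq_add (z : Fin n → Matrix (Fin d) (Fin r) ℝ) :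
    snorm z ^ 2 = snorm (fun i => z i - avg z) ^ 2 + n * fnorm (avg z) ^ 2 := by
  have h := sum_norm_sub_sq_add_card_mul (fun i => toE (z i)) (a := toE (avg z))
    (by rw [← map_sum, sum_eq_card_smul_avg, map_smul, Fintype.card_fin])
  simp only [Fintype.card_fin, ← map_sub, ← fnorm_eq_norm_toE] at h
  rw [snorm_sq, snorm_sq, h]

lemma snorm_sub_avg_le (z : Fin n → Matrix (Fin d) (Fin r) ℝ) :
    snorm (fun i => z i - avg z) ≤ snorm z := by
  rw [← pow_le_pow_iff_left₀ (snorm_nonneg _) (snorm_nonneg _) two_ne_zero,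
    snorm_sq_eq_snorm_sub_avg_sq_add z]
  exact le_add_of_nonneg_right (by positivity)

lemma sqrt_mul_fnorm_avg_le (z : Fin n → Matrix (Fin d) (Fin r) ℝ) :
    Real.sqrt n * fnorm (avg z) ≤ snorm z := by
  rw [← pow_le_pow_iff_left₀ (mul_nonneg (Real.sqrt_nonneg _) (fnorm_nonneg _)) (snorm_nonneg _)
    two_ne_zero,
    snorm_sq_eq_snorm_sub_avg_sq_add z, mul_pow, Real.sq_sqrt (Nat.cast_nonneg n)]
  exact le_add_of_nonneg_left (by positivity)

lemma avg_add (a b : Fin n → Matrix (Fin d) (Fin r) ℝ) :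
    avg (fun i => a i + b i) = avg a + avg b := by
  rw [avg, avg, avg, Finset.sum_add_distrib, smul_add]

lemma avg_sub (a b : Fin n → Matrix (Fin d) (Fin r) ℝ) :
    avg (fun i => a i - b i) = avg a - avg b := by
  rw [avg, avg, avg, Finset.sum_sub_distrib, smul_sub]

lemma avg_mix {W : Matrix (Fin n) (Fin n) ℝ} (hcol : ∀ j, ∑ i, W i j = 1)
    (z : Fin n → Matrix (Fin d) (Fin r) ℝ) :
    avg (fun i => ∑ j, W i j • z j) = avg z := by
  rw [avg, avg, Finset.sum_comm]
  simp only [← Finset.sum_smul, hcol, one_smul]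

lemma avg_landing (hn : 0 < n)
    {Dfi : Fin n → Matrix (Fin d) (Fin r) ℝ → Matrix (Fin d) (Fin r) ℝ}
    {Df : Matrix (Fin d) (Fin r) ℝ → Matrix (Fin d) (Fin r) ℝ}
    (hDf : Df = fun z => (n : ℝ)⁻¹ • ∑ i, Dfi i z) (lam : ℝ) (x : Matrix (Fin d) (Fin r) ℝ) :
    avg (fun i => landing (Dfi i) lam x) = landing Df lam x := by
  subst hDf
  simp only [landing, rgrad, avg, Finset.sum_add_distrib, smul_add, Matrix.smul_mul,
    Matrix.sum_mul, mskew_smul, mskew_sum, Finset.sum_const, Finset.card_univ, Fintype.card_fin,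
    ← Nat.cast_smul_eq_nsmul ℝ, inv_smul_smul₀ (Nat.cast_ne_zero.mpr hn.ne' : (n : ℝ) ≠ 0)]

end Average

section Network

variable {n d r : ℕ}

lemma snorm_mix_add_sub_avg_le {W : Matrix (Fin n) (Fin n) ℝ} {σ : ℝ}
    (hcol : ∀ j, ∑ i, W i j = 1) {y : Fin n → Matrix (Fin d) (Fin r) ℝ}
    (hW : snorm (fun i => (∑ j, W i j • y j) - avg y) ≤ σ * snorm (fun i => y i - avg y))
    (δ : Fin n → Matrix (Fin d) (Fin r) ℝ) :
    snorm (fun i => (∑ j, W i j • y j + δ i) - avg (fun i => ∑ j, W i j • y j + δ i))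
      ≤ σ * snorm (fun i => y i - avg y) + snorm δ := by
  have hsplit : (fun i => (∑ j, W i j • y j + δ i) - avg (fun i => ∑ j, W i j • y j + δ i))
      = (fun i => (∑ j, W i j • y j) - avg y) + fun i => δ i - avg δ := by
    funext i
    rw [avg_add, avg_mix hcol, Pi.add_apply]
    abel
  rw [hsplit]
  exact (snorm_add_le _ _).trans (add_le_add hW (snorm_sub_avg_le δ))

lemma snorm_mix_sub_smul_sub_le {W : Matrix (Fin n) (Fin n) ℝ} {σ α : ℝ} (hα : 0 ≤ α)
    {x : Fin n → Matrix (Fin d) (Fin r) ℝ}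
    (hW : snorm (fun i => (∑ j, W i j • x j) - avg x) ≤ σ * snorm (fun i => x i - avg x))
    (y : Fin n → Matrix (Fin d) (Fin r) ℝ) :
    snorm (fun i => ((∑ j, W i j • x j) - α • y i) - x i)
      ≤ (1 + σ) * snorm (fun i => x i - avg x) + α * snorm (fun i => y i - avg y)
        + α * (Real.sqrt n * fnorm (avg y)) := by
  have hsplit : (fun i => ((∑ j, W i j • x j) - α • y i) - x i)
      = (fun i => (∑ j, W i j • x j) - avg x) - (fun i => x i - avg x)
        - α • (fun i => y i - avg y) - α • fun _ => avg y := by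
    funext i
    simp only [Pi.sub_apply, Pi.smul_apply, smul_sub]
    abel
  rw [hsplit]
  grw [snorm_sub_le, snorm_sub_le, snorm_sub_le, hW]
  rw [snorm_smul, snorm_smul, abs_of_nonneg hα, snorm_const]
  linarith

lemma sqrt_mul_fnorm_avg_le_of_tracking (hn : 0 < n)
    {Dfi : Fin n → Matrix (Fin d) (Fin r) ℝ → Matrix (Fin d) (Fin r) ℝ}
    {Df : Matrix (Fin d) (Fin r) ℝ → Matrix (Fin d) (Fin r) ℝ}
    (hDf : Df = fun z => (n : ℝ)⁻¹ • ∑ i, Dfi i z) {lam L' : ℝ} (hL' : 0 ≤ L')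
    (hLip : ∀ i, ∀ u v : Matrix (Fin d) (Fin r) ℝ,
      fnorm (landing (Dfi i) lam u - landing (Dfi i) lam v) ≤ L' * fnorm (u - v))
    {x y : Fin n → Matrix (Fin d) (Fin r) ℝ}
    (hy : avg y = avg (fun i => landing (Dfi i) lam (x i))) :
    Real.sqrt n * fnorm (avg y)
      ≤ Real.sqrt n * fnorm (landing Df lam (avg x)) + L' * snorm (fun i => x i - avg x) := by
  have hdiff : avg y - landing Df lam (avg x)
      = avg (fun i => landing (Dfi i) lam (x i) - landing (Dfi i) lam (avg x)) := by
    rw [avg_sub, avg_landing hn hDf, hy]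
  have hdev : Real.sqrt n * fnorm (avg y - landing Df lam (avg x))
      ≤ L' * snorm (fun i => x i - avg x) :=
    hdiff ▸ (sqrt_mul_fnorm_avg_le _).trans (snorm_le_mul_of_forall hL' fun i => hLip i _ _)
  have htri := mul_le_mul_of_nonneg_left (fnorm_le_fnorm_sub_add (avg y) (landing Df lam (avg x)))
    (Real.sqrt_nonneg n)
  linarith

end Network

lemma sq_le_of_le_mul_add {σ Y b R : ℝ} (hσ0 : 0 ≤ σ) (hσ1 : σ < 1) (hR0 : 0 ≤ R)
    (hR : R ≤ σ * Y + b) :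
    R ^ 2 ≤ (1 + σ ^ 2) / 2 * Y ^ 2 + (1 + σ ^ 2) / (1 - σ ^ 2) * b ^ 2 := by
  have hD : 0 < 1 - σ ^ 2 := by nlinarith
  calc R ^ 2 ≤ (σ * Y + b) ^ 2 := pow_le_pow_left₀ hR0 hR 2
    _ = (1 + σ ^ 2) / 2 * Y ^ 2 + (1 + σ ^ 2) / (1 - σ ^ 2) * b ^ 2
          - ((1 - σ ^ 2) * Y - 2 * σ * b) ^ 2 / (2 * (1 - σ ^ 2)) := by
        field_simp
        ring
    _ ≤ _ := sub_le_self _ (by positivity)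

/-- Cauchy–Schwarz with weights `1/2, 1/4, 1/8, 1/8`. -/
lemma sq_add_add_add_le (a b c e : ℝ) :
    (a + b + c + e) ^ 2 ≤ 2 * a ^ 2 + 4 * b ^ 2 + 8 * c ^ 2 + 8 * e ^ 2 := by
  nlinarith [sq_nonneg (a - 2 * b), sq_nonneg (a - 4 * c), sq_nonneg (a - 4 * e),
    sq_nonneg (2 * b - 4 * c), sq_nonneg (2 * b - 4 * e), sq_nonneg (c - e)]

lemma sq_le_of_le_consensus_step {σ α L' X Y S Q : ℝ} (hσ0 : 0 ≤ σ) (hσ1 : σ < 1) (hQ0 : 0 ≤ Q)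
    (hQ : Q ≤ (1 + σ) * X + α * Y + α * S + α * L' * X) :
    Q ^ 2 ≤ 8 * (1 + α ^ 2 * L' ^ 2) * X ^ 2 + 4 * α ^ 2 * Y ^ 2 + 8 * α ^ 2 * S ^ 2 := by
  have hσ : (1 + σ) ^ 2 ≤ 4 := by nlinarith
  calc Q ^ 2 ≤ ((1 + σ) * X + α * Y + α * S + α * L' * X) ^ 2 := pow_le_pow_left₀ hQ0 hQ 2
    _ ≤ 2 * ((1 + σ) * X) ^ 2 + 4 * (α * Y) ^ 2 + 8 * (α * S) ^ 2 + 8 * (α * L' * X) ^ 2 :=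
        sq_add_add_add_le _ _ _ _
    _ ≤ _ := by nlinarith [mul_le_mul_of_nonneg_right hσ (sq_nonneg X)]

theorem consensus_error_y_PL_general {n d r : ℕ} (hn : 0 < n) (σW α L' ρ lam γ LS : ℝ)
    (hσ0 : 0 ≤ σW) (hσ1 : σW < 1) (hα : 0 < α) (hL' : 0 < L')
    (W : Matrix (Fin n) (Fin n) ℝ)
    (hWsym : Wᵀ = W) (hWrow : ∀ i, ∑ j, W i j = 1)
    (hWcontract : ∀ z : Fin n → Matrix (Fin d) (Fin r) ℝ,
      snorm (fun i => (∑ j, W i j • z j) - avg z) ≤ σW * snorm (fun i => z i - avg z))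
    (Dfi : Fin n → Matrix (Fin d) (Fin r) ℝ → Matrix (Fin d) (Fin r) ℝ)
    (f : Matrix (Fin d) (Fin r) ℝ → ℝ)
    (Df : Matrix (Fin d) (Fin r) ℝ → Matrix (Fin d) (Fin r) ℝ)
    (hDf : Df = fun z => (n : ℝ)⁻¹ • ∑ i, Dfi i z)
    (hLip : ∀ i, ∀ u v : Matrix (Fin d) (Fin r) ℝ,
      fnorm (landing (Dfi i) lam u - landing (Dfi i) lam v) ≤ L' * fnorm (u - v))
    (xp yp xc yc : Fin n → Matrix (Fin d) (Fin r) ℝ)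
    (hxc : ∀ i, xc i = (∑ j, W i j • xp j) - α • yp i)
    (hyc : ∀ i, yc i = (∑ j, W i j • yp j)
      + landing (Dfi i) lam (xc i) - landing (Dfi i) lam (xp i))
    (hybar : avg yp = avg (fun i => landing (Dfi i) lam (xp i)))
    (hΛbound : fnorm (landing Df lam (avg xp)) ^ 2 ≤
      12 * L' / ρ ^ 2 * (merit f Df γ (avg xp) - LS)) :
    snorm (fun i => yc i - avg yc) ^ 2 ≤
      ((1 + σW ^ 2) / 2 + 4 * L' ^ 2 * α ^ 2 * ((1 + σW ^ 2) / (1 - σW ^ 2)))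
          * snorm (fun i => yp i - avg yp) ^ 2
        + 96 * n * α ^ 2 * L' ^ 3 / ρ ^ 2 * ((1 + σW ^ 2) / (1 - σW ^ 2))
          * (merit f Df γ (avg xp) - LS)
        + 8 * L' ^ 2 * ((1 + σW ^ 2) / (1 - σW ^ 2)) * (1 + α ^ 2 * L' ^ 2)
          * snorm (fun i => xp i - avg xp) ^ 2 := by
  have hcol : ∀ j, ∑ i, W i j = 1 := fun j =>
    (Finset.sum_congr rfl fun i _ => congrFun (congrFun hWsym j) i).trans (hWrow j)
  have hyc' : yc = fun i => ∑ j, W i j • yp j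
      + (landing (Dfi i) lam (xc i) - landing (Dfi i) lam (xp i)) :=
    funext fun i => by rw [hyc, add_sub_assoc]
  have hxc' : (fun i => xc i - xp i) = fun i => ((∑ j, W i j • xp j) - α • yp i) - xp i :=
    funext fun i => by rw [hxc]
  set X := snorm (fun i => xp i - avg xp)
  set Y := snorm (fun i => yp i - avg yp)
  set Q := snorm (fun i => xc i - xp i)
  set Z := fnorm (landing Df lam (avg xp))
  set M := merit f Df γ (avg xp) - LS
  have hR : snorm (fun i => yc i - avg yc) ≤ σW * Y + L' * Q := by
    rw [hyc']
    exact (snorm_mix_add_sub_avg_le hcol (hWcontract yp) _).trans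
      (add_le_add le_rfl (snorm_le_mul_of_forall hL'.le fun i => hLip i _ _))
  have hQ : Q ≤ (1 + σW) * X + α * Y + α * (Real.sqrt n * Z) + α * L' * X := by
    have hstep := hxc' ▸ snorm_mix_sub_smul_sub_le hα.le (hWcontract xp) yp
    have hybar_le := mul_le_mul_of_nonneg_left
      (sqrt_mul_fnorm_avg_le_of_tracking hn hDf hL'.le hLip hybar) hα.le
    linarith
  have hZ : (Real.sqrt n * Z) ^ 2 ≤ n * (12 * L' / ρ ^ 2 * M) := by
    rw [mul_pow, Real.sq_sqrt (Nat.cast_nonneg n)]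
    exact mul_le_mul_of_nonneg_left hΛbound (Nat.cast_nonneg n)
  have hΘ : 0 ≤ (1 + σW ^ 2) / (1 - σW ^ 2) := div_nonneg (by positivity) (by nlinarith)
  calc _ ≤ (1 + σW ^ 2) / 2 * Y ^ 2 + (1 + σW ^ 2) / (1 - σW ^ 2) * (L' * Q) ^ 2 :=
        sq_le_of_le_mul_add hσ0 hσ1 (snorm_nonneg _) hR
    _ ≤ (1 + σW ^ 2) / 2 * Y ^ 2 + (1 + σW ^ 2) / (1 - σW ^ 2) * L' ^ 2
          * (8 * (1 + α ^ 2 * L' ^ 2) * X ^ 2 + 4 * α ^ 2 * Y ^ 2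
            + 8 * α ^ 2 * (n * (12 * L' / ρ ^ 2 * M))) := by
        rw [mul_pow, ← mul_assoc]
        grw [sq_le_of_le_consensus_step hσ0 hσ1 (snorm_nonneg _) hQ, hZ]
    _ = _ := by ring

/-- consensus error on `𝐲` under the local PŁ regime, Lemma 8 of the paper.
With a symmetric doubly stochastic `W` (contraction factor `σ_W < 1`, `Θ = (1+σ_W²)/(1−σ_W²)`),
`L'`-Lipschitz local landing fields `Λᵢ`, the DRFGT updates, the tracking identity
`ȳ_{k−1} = (1/n)Σᵢ Λᵢ(x_{i,k−1})`, and the bound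
`‖Λ(x̄_{k−1})‖² ≤ (12L'/ρ²)(𝓛(x̄_{k−1}) − 𝓛*_S)`, the consensus error on `𝐲` satisfies the
stated inequality. -/
theorem consensus_error_y_PL {n d r : ℕ} (hn : 0 < n) (σW α L' ρ lam γ LS : ℝ)
    (hσ0 : 0 ≤ σW) (hσ1 : σW < 1) (hα : 0 < α) (hL' : 0 < L') (hρ : 0 < ρ) (hlam : 0 < lam)
    (W : Matrix (Fin n) (Fin n) ℝ)
    (hWsym : Wᵀ = W) (hWnn : ∀ i j, 0 ≤ W i j) (hWrow : ∀ i, ∑ j, W i j = 1)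
    (hWcontract : ∀ z : Fin n → Matrix (Fin d) (Fin r) ℝ,
      snorm (fun i => (∑ j, W i j • z j) - avg z) ≤ σW * snorm (fun i => z i - avg z))
    (fi : Fin n → Matrix (Fin d) (Fin r) ℝ → ℝ)
    (Dfi : Fin n → Matrix (Fin d) (Fin r) ℝ → Matrix (Fin d) (Fin r) ℝ)
    (f : Matrix (Fin d) (Fin r) ℝ → ℝ) (hf : f = fun z => (n : ℝ)⁻¹ * ∑ i, fi i z)
    (Df : Matrix (Fin d) (Fin r) ℝ → Matrix (Fin d) (Fin r) ℝ)
    (hDf : Df = fun z => (n : ℝ)⁻¹ • ∑ i, Dfi i z)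
    (hLip : ∀ i, ∀ u v : Matrix (Fin d) (Fin r) ℝ,
      fnorm (landing (Dfi i) lam u - landing (Dfi i) lam v) ≤ L' * fnorm (u - v))
    (xp yp xc yc : Fin n → Matrix (Fin d) (Fin r) ℝ)
    (hxc : ∀ i, xc i = (∑ j, W i j • xp j) - α • yp i)
    (hyc : ∀ i, yc i = (∑ j, W i j • yp j)
      + landing (Dfi i) lam (xc i) - landing (Dfi i) lam (xp i))
    (hybar : avg yp = avg (fun i => landing (Dfi i) lam (xp i)))
    (hΛbound : fnorm (landing Df lam (avg xp)) ^ 2 ≤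
      12 * L' / ρ ^ 2 * (merit f Df γ (avg xp) - LS)) :
    snorm (fun i => yc i - avg yc) ^ 2 ≤
      ((1 + σW ^ 2) / 2 + 4 * L' ^ 2 * α ^ 2 * ((1 + σW ^ 2) / (1 - σW ^ 2)))
          * snorm (fun i => yp i - avg yp) ^ 2
        + 96 * n * α ^ 2 * L' ^ 3 / ρ ^ 2 * ((1 + σW ^ 2) / (1 - σW ^ 2))
          * (merit f Df γ (avg xp) - LS)
        + 8 * L' ^ 2 * ((1 + σW ^ 2) / (1 - σW ^ 2)) * (1 + α ^ 2 * L' ^ 2)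
          * snorm (fun i => xp i - avg xp) ^ 2 :=
  consensus_error_y_PL_general hn σW α L' ρ lam γ LS hσ0 hσ1 hα hL' W hWsym hWrow hWcontract Dfi f
    Df hDf hLip xp yp xc yc hxc hyc hybar hΛbound

end DRFGT
end
end

section
/- (Local linear rate of DRFGT.) Let 0 ≤ σ_W < 1, L' > 0, ρ ∈ (0, 1/2], 0 < μ' ≤ L', C > 0, Θ = (1+σ_W²)/(1−σ_W²), Φ = 4L'/(ρμ') + 8L'C²/(ρ²μ'). Define the 3×3 nonnegative matrix M = [[(1+σ_W²)/2 + 4L'²α²Θ, 8(1 + α²L'²)Θ, 96 L'²α²Θ/ρ²], [α²L'²Θ, (1+σ_W²)/2, 0], [0, α²L'² + αL'C²/ρ, 1 − αρμ'/4]]. If the step size satisfies 0 < α ≤ min{ ρ/(2L'), (1−σ_W²)/(ρμ'), √(1−σ_W²)/(4L'√Θ·(1 + 12Φ/ρ²)^{1/4}), (1−σ_W²)/(16L'Θ) }, then the spectral radius of M satisfies ρ(M) ≤ 1 − αρμ'/8; moreover there exists a positive vector δ⃗ ∈ ℝ³ with M δ⃗ ≤ (1 − αρμ'/8) δ⃗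 element-wise. -/
open Matrix BigOperators Finset

noncomputable section

namespace DRFGT

/-- The transition matrix `M` of the local linear-rate system, with
`Θ = (1+σ_W²)/(1−σ_W²)`. -/
def Mmat (σW L' ρ μ' C α : ℝ) : Matrix (Fin 3) (Fin 3) ℝ :=
  !![(1 + σW ^ 2) / 2 + 4 * L' ^ 2 * α ^ 2 * ((1 + σW ^ 2) / (1 - σW ^ 2)),
       8 * (1 + α ^ 2 * L' ^ 2) * ((1 + σW ^ 2) / (1 - σW ^ 2)),
       96 * L' ^ 2 * α ^ 2 * ((1 + σW ^ 2) / (1 - σW ^ 2)) / ρ ^ 2;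
     α ^ 2 * L' ^ 2 * ((1 + σW ^ 2) / (1 - σW ^ 2)),
       (1 + σW ^ 2) / 2,
       0;
     0,
       α ^ 2 * L' ^ 2 + α * L' * C ^ 2 / ρ,
       1 - α * ρ * μ' / 4]

lemma spec_bound {n : ℕ} (M : Matrix (Fin n) (Fin n) ℝ) (hM : ∀ i j, 0 ≤ M i j)
    (w : Fin n → ℝ) (hw : ∀ i, 0 < w i) (z : ℝ) (h : ∀ i, M.mulVec w i ≤ z * w i) :
    ∀ μ ∈ spectrum ℂ (M.map (fun t : ℝ => (t : ℂ))), ‖μ‖ ≤ z := by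
  intro μ hμ
  rw [spectrum.mem_iff] at hμ
  set A := M.map (fun t : ℝ => (t : ℂ)) with hA
  have hdet : (algebraMap ℂ (Matrix (Fin n) (Fin n) ℂ) μ - A).det = 0 := by
    by_contra hd
    exact hμ ((Matrix.isUnit_iff_isUnit_det _).2 (isUnit_iff_ne_zero.2 hd))
  obtain ⟨u, hu0, hu⟩ := (Matrix.exists_mulVec_eq_zero_iff).2 hdet
  have heig : ∀ i, μ * u i = ∑ j, (M i j : ℂ) * u j := by
    intro i
    have h2 := congrFun hu i
    simp only [Matrix.sub_mulVec, Pi.sub_apply, sub_eq_zero, Pi.zero_apply] at h2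
    have e1 : ((algebraMap ℂ (Matrix (Fin n) (Fin n) ℂ)) μ *ᵥ u) i = μ * u i := by
      simp [Matrix.mulVec, dotProduct, Matrix.algebraMap_matrix_apply, ite_mul]
    have e2 : (A *ᵥ u) i = ∑ j, (M i j : ℂ) * u j := by
      simp [hA, Matrix.mulVec, dotProduct]
    rw [← e1, h2, e2]
  obtain ⟨i0, -, hi0⟩ := Finset.exists_max_image Finset.univ (fun i => ‖u i‖ / w i)
    ⟨⟨0, Nat.pos_of_ne_zero (by rintro rfl; exact hu0 (Subsingleton.elim _ _))⟩, Finset.mem_univ _⟩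
  obtain ⟨j, hj⟩ := Function.ne_iff.1 hu0
  have hj' : u j ≠ 0 := by simpa using hj
  have hwi0 := hw i0
  have hui0 : 0 < ‖u i0‖ := by
    have h1 : 0 < ‖u j‖ / w j := div_pos (by simpa using hj') (hw j)
    have h2 := lt_of_lt_of_le h1 (hi0 j (Finset.mem_univ j))
    have h3 := mul_pos h2 hwi0
    rwa [div_mul_cancel₀ _ (ne_of_gt hwi0)] at h3
  have key : ‖μ‖ * ‖u i0‖ ≤ z * ‖u i0‖ := by
    calc ‖μ‖ * ‖u i0‖ = ‖μ * u i0‖ := (norm_mul _ _).symm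
      _ = ‖∑ j, (M i0 j : ℂ) * u j‖ := by rw [heig i0]
      _ ≤ ∑ j, ‖(M i0 j : ℂ) * u j‖ := norm_sum_le _ _
      _ = ∑ j, M i0 j * ‖u j‖ := by
          refine Finset.sum_congr rfl fun j _ => ?_
          rw [norm_mul, Complex.norm_real, Real.norm_eq_abs, abs_of_nonneg (hM _ _)]
      _ ≤ ∑ j, M i0 j * ((‖u i0‖ / w i0) * w j) := by
          refine Finset.sum_le_sum fun j _ => mul_le_mul_of_nonneg_left ?_ (hM _ _)
          have := hi0 j (Finset.mem_univ j)
          rw [div_le_div_iff₀ (hw j) hwi0] at this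
          rw [div_mul_eq_mul_div, le_div_iff₀ hwi0]
          linarith
      _ = (‖u i0‖ / w i0) * ∑ j, M i0 j * w j := by
          rw [Finset.mul_sum]; exact Finset.sum_congr rfl fun j _ => by ring
      _ ≤ (‖u i0‖ / w i0) * (z * w i0) := by
          refine mul_le_mul_of_nonneg_left ?_ (by positivity)
          simpa [Matrix.mulVec, dotProduct] using h i0
      _ = z * ‖u i0‖ := by field_simp
  exact le_of_mul_le_mul_right key hui0


set_option maxHeartbeats 2000000 in
lemma rows_aux (σ2 L' ρ μ' C α Θ Φ s : ℝ)
    (he : 0 < 1 - σ2) (hL' : 0 < L') (hρ0 : 0 < ρ) (hρh : ρ ≤ 1/2)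
    (hμ'0 : 0 < μ') (hC : 0 < C) (hα : 0 < α) (hΘ : 0 < Θ)
    (hΦval : ρ*μ'/8*Φ = L'/2 + L'*C^2/ρ)
    (hs : s^2 = 1 + 12*Φ/ρ^2) (hs19 : 19 ≤ s)
    (hβs : α^2*L'^2*Θ*s ≤ (1-σ2)/16)
    (hαΘ : α*L'*Θ ≤ (1-σ2)/16)
    (h1 : α*L' ≤ ρ/2)
    (h2 : α*ρ*μ' ≤ 1-σ2) :
    ∃ b c : ℝ, 0 < b ∧ 0 < c ∧
      ((1+σ2)/2 + 4*L'^2*α^2*Θ) * 1 + 8*(1+α^2*L'^2)*Θ*b + 96*L'^2*α^2*Θ/ρ^2*c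
          ≤ (1 - α*ρ*μ'/8) * 1 ∧
      α^2*L'^2*Θ * 1 + (1+σ2)/2*b + 0*c ≤ (1 - α*ρ*μ'/8)*b ∧
      0*1 + (α^2*L'^2 + α*L'*C^2/ρ)*b + (1 - α*ρ*μ'/4)*c ≤ (1 - α*ρ*μ'/8)*c := by
  have hβpos : 0 < α^2*L'^2*Θ := by positivity
  have hrpos : 0 < L'/2 + L'*C^2/ρ := by positivity
  have hΦpos : 0 < Φ := by nlinarith [mul_pos hρ0 hμ'0]
  obtain ⟨b, hb3, hbpos⟩ : ∃ b, b*(3*(1-σ2)) = 8*(α^2*L'^2*Θ) ∧ 0 < b :=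
    ⟨8*(α^2*L'^2*Θ)/(3*(1-σ2)), by field_simp, by positivity⟩
  have hαL1 : α*L' ≤ 1/4 := by linarith
  have hαL2 : α^2*L'^2 ≤ 1/16 := by
    calc α^2*L'^2 = (α*L')^2 := by ring
      _ ≤ (1/4)^2 := pow_le_pow_left₀ (by positivity) hαL1 2
      _ = 1/16 := by norm_num
  refine ⟨b, Φ*b, hbpos, mul_pos hΦpos hbpos, ?_, ?_, ?_⟩
  · -- row 0
    have hT3eq : 96*L'^2*α^2*Θ/ρ^2*(Φ*b) = 8*(α^2*L'^2*Θ)*(s^2-1)*b := by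
      have h12 : s^2 - 1 = 12*Φ/ρ^2 := by linarith
      rw [h12]; field_simp; ring
    have hβ76 : α^2*L'^2*Θ ≤ (1-σ2)/304 := by nlinarith [hβs, hs19, hβpos]
    have hq3 : (α*L'*Θ)^2 ≤ ((1-σ2)/16)^2 :=
      pow_le_pow_left₀ (by positivity) hαΘ 2
    have hmul := congrArg (fun x => Θ * x) hb3
    have hΘb3 : Θ*b*(3*(1-σ2)) ≤ (1-σ2)^2/32 := by
      calc Θ*b*(3*(1-σ2)) = Θ*(b*(3*(1-σ2))) := by ring
        _ = Θ*(8*(α^2*L'^2*Θ)) := hmul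
        _ = 8*(α*L'*Θ)^2 := by ring
        _ ≤ 8*((1-σ2)/16)^2 := by linarith
        _ = (1-σ2)^2/32 := by ring
    have hΘb : Θ*b ≤ (1-σ2)/96 := by
      rw [show (1-σ2)/96 = ((1-σ2)^2/32)/(3*(1-σ2)) by field_simp; ring,
        le_div_iff₀ (by positivity)]
      exact hΘb3
    have hT2 : 8*(1+α^2*L'^2)*Θ*b ≤ 17*(1-σ2)/192 := by
      nlinarith [hΘb, hαL2, mul_pos hΘ hbpos]
    have hq4 : (α^2*L'^2*Θ*s)^2 ≤ ((1-σ2)/16)^2 :=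
      pow_le_pow_left₀ (by positivity) hβs 2
    have hT3e : 8*(α^2*L'^2*Θ)*(s^2-1)*b*(3*(1-σ2)) = 64*(α^2*L'^2*Θ)^2*(s^2-1) := by
      calc 8*(α^2*L'^2*Θ)*(s^2-1)*b*(3*(1-σ2))
          = 8*(α^2*L'^2*Θ)*(s^2-1)*(b*(3*(1-σ2))) := by ring
        _ = 8*(α^2*L'^2*Θ)*(s^2-1)*(8*(α^2*L'^2*Θ)) := by rw [hb3]
        _ = 64*(α^2*L'^2*Θ)^2*(s^2-1) := by ring
    have hup : 64*(α^2*L'^2*Θ)^2*(s^2-1) ≤ (1-σ2)^2/4 := by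
      nlinarith [hq4, sq_nonneg (α^2*L'^2*Θ)]
    have hT3 : 8*(α^2*L'^2*Θ)*(s^2-1)*b ≤ (1-σ2)/12 := by
      rw [show (1-σ2)/12 = ((1-σ2)^2/4)/(3*(1-σ2)) by field_simp; ring,
        le_div_iff₀ (by positivity)]
      rw [hT3e]; exact hup
    rw [hT3eq]
    linarith [hβ76, hT2, hT3, h2]
  · -- row 1
    have key : α*ρ*μ'*b ≤ (1-σ2)*b := by
      have h' := mul_le_mul_of_nonneg_right h2 hbpos.le
      linarith [h']
    linarith [hb3, key]
  · -- row 2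
    have hq2 : α^2*L'^2 ≤ α*L'/2 := by
      calc α^2*L'^2 = (α*L')*(α*L') := by ring
        _ ≤ (1/4)*(α*L') := mul_le_mul_of_nonneg_right hαL1 (by positivity)
        _ ≤ α*L'/2 := by nlinarith [mul_pos hα hL']
    have hval : α*(ρ*μ'/8*Φ) = α*(L'/2) + α*(L'*C^2/ρ) := by rw [hΦval]; ring
    have hq : α^2*L'^2 + α*L'*C^2/ρ ≤ α*(ρ*μ'/8*Φ) := by
      rw [hval]
      have hh : α*(L'*C^2/ρ) = α*L'*C^2/ρ := by ring
      linarith [hq2, hh.ge, hh.le]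
    have h' := mul_le_mul_of_nonneg_right hq hbpos.le
    nlinarith [h']


set_option maxHeartbeats 1000000 in
/-- local linear rate of DRFGT, Theorem 4 of the paper. Let
`Θ = (1+σ_W²)/(1−σ_W²)` and `Φ = 4L'/(ρμ') + 8L'C²/(ρ²μ')`. If the step size satisfies the
stated bound, then the spectral radius of `M` is at most `1 − αρμ'/8` (every complex eigenvalue
`μ` of `M` satisfies `‖μ‖ ≤ 1 − αρμ'/8`), and moreover there is an element-wise positive vector
`v` with `M v ≤ (1 − αρμ'/8) v` element-wise. -/
theorem local_linear_rate (σW L' ρ μ' C α : ℝ)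
    (hσ0 : 0 ≤ σW) (hσ1 : σW < 1) (hL' : 0 < L')
    (hρ : ρ ∈ Set.Ioc (0 : ℝ) (1 / 2)) (hμ'0 : 0 < μ') (hμ'L : μ' ≤ L') (hC : 0 < C)
    (hα : 0 < α)
    (hαle : α ≤ min
      (min (ρ / (2 * L')) ((1 - σW ^ 2) / (ρ * μ')))
      (min (Real.sqrt (1 - σW ^ 2) /
          (4 * L' * Real.sqrt ((1 + σW ^ 2) / (1 - σW ^ 2)) *
            (1 + 12 * (4 * L' / (ρ * μ') + 8 * L' * C ^ 2 / (ρ ^ 2 * μ')) / ρ ^ 2)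
              ^ ((1 : ℝ) / 4)))
        ((1 - σW ^ 2) / (16 * L' * ((1 + σW ^ 2) / (1 - σW ^ 2)))))) :
    (∀ μ ∈ spectrum ℂ ((Mmat σW L' ρ μ' C α).map (fun t : ℝ => (t : ℂ))),
      ‖μ‖ ≤ 1 - α * ρ * μ' / 8) ∧
    ∃ v : Fin 3 → ℝ, (∀ i, 0 < v i) ∧
      ∀ i, (Mmat σW L' ρ μ' C α).mulVec v i ≤ (1 - α * ρ * μ' / 8) * v i := by
  obtain ⟨hρ0, hρh⟩ := hρ
  have hσ2lt : σW ^ 2 < 1 := by nlinarith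
  have he : 0 < 1 - σW ^ 2 := by linarith
  have hΘpos : 0 < (1 + σW ^ 2) / (1 - σW ^ 2) := by positivity
  have hΦpos : 0 < 4 * L' / (ρ * μ') + 8 * L' * C ^ 2 / (ρ ^ 2 * μ') := by positivity
  have hS2pos : 0 < 1 + 12 * (4 * L' / (ρ * μ') + 8 * L' * C ^ 2 / (ρ ^ 2 * μ')) / ρ ^ 2 := by
    positivity
  -- extract the four step-size bounds
  have hm1 : α ≤ ρ / (2 * L') := hαle.trans ((min_le_left _ _).trans (min_le_left _ _))
  have hm2 : α ≤ (1 - σW ^ 2) / (ρ * μ') :=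
    hαle.trans ((min_le_left _ _).trans (min_le_right _ _))
  have hm3 : α ≤ Real.sqrt (1 - σW ^ 2) /
      (4 * L' * Real.sqrt ((1 + σW ^ 2) / (1 - σW ^ 2)) *
        (1 + 12 * (4 * L' / (ρ * μ') + 8 * L' * C ^ 2 / (ρ ^ 2 * μ')) / ρ ^ 2)
          ^ ((1 : ℝ) / 4)) :=
    hαle.trans ((min_le_right _ _).trans (min_le_left _ _))
  have hm4 : α ≤ (1 - σW ^ 2) / (16 * L' * ((1 + σW ^ 2) / (1 - σW ^ 2))) :=
    hαle.trans ((min_le_right _ _).trans (min_le_right _ _))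
  rw [le_div_iff₀ (by positivity)] at hm1
  have h1 : α * L' ≤ ρ / 2 := by linarith
  rw [le_div_iff₀ (by positivity)] at hm2
  have h2 : α * ρ * μ' ≤ 1 - σW ^ 2 := by linarith [hm2]
  rw [le_div_iff₀ (by positivity)] at hm4
  have h4 : α * L' * ((1 + σW ^ 2) / (1 - σW ^ 2)) ≤ (1 - σW ^ 2) / 16 := by linarith [hm4]
  -- third bound
  set S2 := 1 + 12 * (4 * L' / (ρ * μ') + 8 * L' * C ^ 2 / (ρ ^ 2 * μ')) / ρ ^ 2 with hS2def
  have hDpos : 0 < 4 * L' * Real.sqrt ((1 + σW ^ 2) / (1 - σW ^ 2)) * S2 ^ ((1 : ℝ) / 4) := by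
    have := Real.sqrt_pos.mpr hΘpos
    have := Real.rpow_pos_of_pos hS2pos ((1 : ℝ) / 4)
    positivity
  rw [le_div_iff₀ hDpos] at hm3
  have hsq : (α * (4 * L' * Real.sqrt ((1 + σW ^ 2) / (1 - σW ^ 2)) * S2 ^ ((1 : ℝ) / 4))) ^ 2
      ≤ 1 - σW ^ 2 := by
    have h' := pow_le_pow_left₀ (by positivity) hm3 2
    rwa [Real.sq_sqrt he.le] at h'
  have h14 : (S2 ^ ((1 : ℝ) / 4)) ^ 2 = Real.sqrt S2 := by
    rw [← Real.rpow_natCast (S2 ^ ((1 : ℝ) / 4)) 2, ← Real.rpow_mul hS2pos.le,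
      Real.sqrt_eq_rpow]
    norm_num
  have hQ : Real.sqrt ((1 + σW ^ 2) / (1 - σW ^ 2)) ^ 2 = (1 + σW ^ 2) / (1 - σW ^ 2) :=
    Real.sq_sqrt hΘpos.le
  have hsqexp : (α * (4 * L' * Real.sqrt ((1 + σW ^ 2) / (1 - σW ^ 2)) * S2 ^ ((1 : ℝ) / 4))) ^ 2
      = α ^ 2 * (16 * L' ^ 2 * ((1 + σW ^ 2) / (1 - σW ^ 2)) * Real.sqrt S2) := by
    calc (α * (4 * L' * Real.sqrt ((1 + σW ^ 2) / (1 - σW ^ 2)) * S2 ^ ((1 : ℝ) / 4))) ^ 2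
        = α ^ 2 * (16 * L' ^ 2 * (Real.sqrt ((1 + σW ^ 2) / (1 - σW ^ 2)) ^ 2)
            * ((S2 ^ ((1 : ℝ) / 4)) ^ 2)) := by ring
      _ = _ := by rw [hQ, h14]
  rw [hsqexp] at hsq
  have hβs : α ^ 2 * L' ^ 2 * ((1 + σW ^ 2) / (1 - σW ^ 2)) * Real.sqrt S2
      ≤ (1 - σW ^ 2) / 16 := by linarith [hsq]
  -- sqrt S2 properties
  have hs2 : Real.sqrt S2 ^ 2
      = 1 + 12 * (4 * L' / (ρ * μ') + 8 * L' * C ^ 2 / (ρ ^ 2 * μ')) / ρ ^ 2 := by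
    rw [Real.sq_sqrt hS2pos.le]
  have hΦ8 : 8 ≤ 4 * L' / (ρ * μ') + 8 * L' * C ^ 2 / (ρ ^ 2 * μ') := by
    have t1 : 8 ≤ 4 * L' / (ρ * μ') := by
      rw [le_div_iff₀ (by positivity)]
      nlinarith
    have t2 : 0 ≤ 8 * L' * C ^ 2 / (ρ ^ 2 * μ') := by positivity
    linarith
  have h361 : (361 : ℝ) ≤ S2 := by
    have h360 : (360 : ℝ) ≤ 12 * (4 * L' / (ρ * μ') + 8 * L' * C ^ 2 / (ρ ^ 2 * μ')) / ρ ^ 2 := by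
      rw [le_div_iff₀ (by positivity)]
      nlinarith
    rw [hS2def]; linarith
  have hs19 : (19 : ℝ) ≤ Real.sqrt S2 := by
    have : Real.sqrt 361 ≤ Real.sqrt S2 := Real.sqrt_le_sqrt h361
    rwa [show (361 : ℝ) = 19 ^ 2 by norm_num, Real.sqrt_sq (by norm_num : (0:ℝ) ≤ 19)] at this
  have hΦval : ρ * μ' / 8 * (4 * L' / (ρ * μ') + 8 * L' * C ^ 2 / (ρ ^ 2 * μ'))
      = L' / 2 + L' * C ^ 2 / ρ := by
    field_simp
    ring
  obtain ⟨b, c, hbpos, hcpos, hr0, hr1, hr2⟩ :=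
    rows_aux (σW ^ 2) L' ρ μ' C α ((1 + σW ^ 2) / (1 - σW ^ 2))
      (4 * L' / (ρ * μ') + 8 * L' * C ^ 2 / (ρ ^ 2 * μ')) (Real.sqrt S2)
      he hL' hρ0 hρh hμ'0 hC hα hΘpos hΦval hs2 hs19 hβs h4 h1 h2
  set v : Fin 3 → ℝ := ![1, b, c] with hv
  have hvpos : ∀ i, 0 < v i := by
    intro i
    fin_cases i
    · norm_num [hv]
    · simpa [hv] using hbpos
    · simpa [hv] using hcpos
  have hineq : ∀ i, (Mmat σW L' ρ μ' C α).mulVec v i ≤ (1 - α * ρ * μ' / 8) * v i := by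
    intro i
    fin_cases i <;>
      simp [hv, Mmat, Matrix.mulVec, dotProduct, Fin.sum_univ_three]
    · linarith [hr0]
    · linarith [hr1]
    · linarith [hr2]
  have hM : ∀ i j, 0 ≤ Mmat σW L' ρ μ' C α i j := by
    intro i j
    fin_cases i <;> fin_cases j <;>
      simp [Mmat] <;>
      first
        | positivity
        | linarith [h2, sq_nonneg σW]
  exact ⟨spec_bound _ hM v hvpos _ hineq, v, hvpos, hineq⟩

end DRFGT
end
end
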